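/- arXiv:2407.03726 — 5 statements merged into one kernel-verified Lean document; each statement's English description precedes it below -/
import Mathlib

section
/- Let M be a proper metric space, y₀ an M-valued random element with f₂(p) = E[d(p,y₀)²] finite for some p* ∈ M. Then f₂ is finite and continuous on M and the Fréchet mean set argmin_{p∈M} f₂(p) is nonempty and compact. -/
/-!
Squared distances to different points dominate each other up to constants, since
`d(p, y)² ≤ 2 d(p, q)² + 2 d(q, y)²`. Hence finiteness of `f₂` at one point propagates to all
points, and dominated convergence (with the bound `2 (1 + d(p, y)²)` on the unit ball around `p`)
gives continuity. The same inequality yields `d(p, q)² ≤ 2 f₂(p) + 2 f₂(q)`, so sublevel sets of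
`f₂` are bounded, hence compact in a proper space, and the extreme value theorem applies.
-/

open MeasureTheory Metric

section Topology

variable {α β : Type*} [LinearOrder α] [TopologicalSpace α] [OrderClosedTopology α]
  [PseudoMetricSpace β] [ProperSpace β]

theorem Continuous.isCompact_setOf_forall_le_of_isBounded {f : β → α} (hf : Continuous f)
    (x₀ : β) (h : Bornology.IsBounded {x | f x ≤ f x₀}) :
    IsCompact {x | ∀ y, f x ≤ f y} := by
  have hclosed : IsClosed {x | ∀ y, f x ≤ f y} := by
    simp only [Set.ofPred_forall]
    exact isClosed_iInter fun y => isClosed_le hf continuous_const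
  exact isCompact_of_isClosed_isBounded hclosed (h.subset fun x hx => hx x₀)

end Topology

section FrechetFunction

theorem dist_sq_le_two_mul_add {M : Type*} [PseudoMetricSpace M] (x y z : M) :
    dist x z ^ 2 ≤ 2 * (dist x y ^ 2 + dist y z ^ 2) :=
  (pow_le_pow_left₀ dist_nonneg (dist_triangle x y z) 2).trans add_sq_le

variable {M Ω : Type*} [PseudoMetricSpace M] [MeasurableSpace Ω] {μ : Measure Ω} {Y : Ω → M}

theorem dist_sq_le_two_mul_integral_dist_sq_add [IsProbabilityMeasure μ] {p q : M}
    (hp : Integrable (fun ω => dist p (Y ω) ^ 2) μ)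
    (hq : Integrable (fun ω => dist q (Y ω) ^ 2) μ) :
    dist p q ^ 2 ≤ 2 * ((∫ ω, dist p (Y ω) ^ 2 ∂μ) + ∫ ω, dist q (Y ω) ^ 2 ∂μ) := by
  calc dist p q ^ 2 = ∫ _, dist p q ^ 2 ∂μ := by simp
    _ ≤ ∫ ω, 2 * (dist p (Y ω) ^ 2 + dist q (Y ω) ^ 2) ∂μ :=
        integral_mono (integrable_const _) ((hp.add hq).const_mul 2) fun ω => by
          simpa only [dist_comm (Y ω) q] using dist_sq_le_two_mul_add p (Y ω) q
    _ = 2 * ((∫ ω, dist p (Y ω) ^ 2 ∂μ) + ∫ ω, dist q (Y ω) ^ 2 ∂μ) := by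
        rw [integral_const_mul, integral_add hp hq]

theorem isBounded_setOf_integral_dist_sq_le [IsProbabilityMeasure μ]
    (h : ∀ p, Integrable (fun ω => dist p (Y ω) ^ 2) μ) (c : ℝ) :
    Bornology.IsBounded {p | ∫ ω, dist p (Y ω) ^ 2 ∂μ ≤ c} := by
  refine isBounded_iff.2 ⟨√(4 * c), fun p hp q hq => ?_⟩
  have hpq := dist_sq_le_two_mul_integral_dist_sq_add (h p) (h q)
  exact (le_abs_self _).trans (Real.abs_le_sqrt (by linarith [hp.out, hq.out]))

section Measurable

variable [MeasurableSpace M] [OpensMeasurableSpace M]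

theorem measurable_dist_sq (hY : Measurable Y) (p : M) :
    Measurable fun ω => dist p (Y ω) ^ 2 :=
  ((continuous_const.dist continuous_id).measurable.comp hY).pow_const 2

theorem integrable_dist_sq_of_integrable [IsFiniteMeasure μ] (hY : Measurable Y) {p₀ : M}
    (h : Integrable (fun ω => dist p₀ (Y ω) ^ 2) μ) (p : M) :
    Integrable (fun ω => dist p (Y ω) ^ 2) μ := by
  refine (((integrable_const (dist p p₀ ^ 2)).add h).const_mul 2).mono'
    (measurable_dist_sq hY p).aestronglyMeasurable (ae_of_all _ fun ω => ?_)
  rw [Real.norm_of_nonneg (sq_nonneg _)]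
  exact dist_sq_le_two_mul_add p p₀ (Y ω)

theorem continuous_integral_dist_sq [IsFiniteMeasure μ] (hY : Measurable Y)
    (h : ∀ p, Integrable (fun ω => dist p (Y ω) ^ 2) μ) :
    Continuous fun p => ∫ ω, dist p (Y ω) ^ 2 ∂μ := by
  refine continuous_iff_continuousAt.2 fun p => continuousAt_of_dominated
    (bound := fun ω => 2 * (1 + dist p (Y ω) ^ 2))
    (Filter.Eventually.of_forall fun q => (measurable_dist_sq hY q).aestronglyMeasurable)
    ?_ (((integrable_const 1).add (h p)).const_mul 2)
    (ae_of_all _ fun ω => ((continuous_id.dist continuous_const).pow 2).continuousAt)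
  filter_upwards [ball_mem_nhds p one_pos] with q hq
  refine ae_of_all _ fun ω => ?_
  have hqp : dist q p ^ 2 ≤ 1 := pow_le_one₀ dist_nonneg (mem_ball.1 hq).le
  rw [Real.norm_of_nonneg (sq_nonneg _)]
  linarith [dist_sq_le_two_mul_add q p (Y ω)]

end Measurable

end FrechetFunction

/-- On a proper metric space, if `f₂ p = E[d(p, y₀)²]` is finite at some point `p*`, then `f₂`
is finite and continuous on all of `M` and the Fréchet mean set (the set of global minimizers
of `f₂`) is nonempty and compact. -/
theorem frechetMeanSet_nonempty_compact {M Ω : Type*} [MetricSpace M] [ProperSpace M]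
    [MeasurableSpace M] [BorelSpace M] [MeasurableSpace Ω]
    (μ : Measure Ω) [IsProbabilityMeasure μ]
    (y₀ : Ω → M) (hy₀ : Measurable y₀)
    (pstar : M) (hfin : ∫⁻ ω, ENNReal.ofReal (dist pstar (y₀ ω) ^ 2) ∂μ ≠ ⊤)
    (f₂ : M → ℝ) (hf₂ : ∀ p, f₂ p = (∫⁻ ω, ENNReal.ofReal (dist p (y₀ ω) ^ 2) ∂μ).toReal) :
    (∀ p : M, ∫⁻ ω, ENNReal.ofReal (dist p (y₀ ω) ^ 2) ∂μ ≠ ⊤) ∧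
      Continuous f₂ ∧
      ({p : M | ∀ q : M, f₂ p ≤ f₂ q}).Nonempty ∧
      IsCompact {p : M | ∀ q : M, f₂ p ≤ f₂ q} := by
  have hnonneg : ∀ p, 0 ≤ᵐ[μ] fun ω => dist p (y₀ ω) ^ 2 :=
    fun p => ae_of_all _ fun ω => sq_nonneg _
  have hint_iff := fun p => lintegral_ofReal_ne_top_iff_integrable
    (measurable_dist_sq hy₀ p).aestronglyMeasurable (hnonneg p)
  have hint := integrable_dist_sq_of_integrable hy₀ ((hint_iff pstar).1 hfin)
  obtain rfl : f₂ = fun p => ∫ ω, dist p (y₀ ω) ^ 2 ∂μ := funext fun p => by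
    rw [hf₂, integral_eq_lintegral_of_nonneg_ae (hnonneg p)
      (measurable_dist_sq hy₀ p).aestronglyMeasurable]
  have hcont := continuous_integral_dist_sq hy₀ hint
  have hbdd := isBounded_setOf_integral_dist_sq_le hint (∫ ω, dist pstar (y₀ ω) ^ 2 ∂μ)
  exact ⟨fun p => (hint_iff p).2 (hint p), hcont, hcont.exists_forall_le_of_isBounded pstar hbdd,
    hcont.isCompact_setOf_forall_le_of_isBounded pstar hbdd⟩
end

section
/- Let M be a metric space, y₀ an M-valued random element, α ∈ {1,2}, and p₀ a minimizer of f_α(p) = E[d(p,y₀)^α] with f_α(p₀) finite. Then for every p ∈ M, f_α(p) ≥ f_α(p₀) + d(p,p₀)^(α/2) · (d(p,p₀)^(α/2) − 2 f_α(p₀)^(1/2)). -/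
/-!
Write `s = α / 2 ≤ 1` and `D = d(p, p₀)`. Since `t ↦ t ^ s` is subadditive, it is `s`-Hölder:
`|b ^ s - c ^ s| ≤ |b - c| ^ s`. Together with the reverse triangle inequality
`|D - d(p₀, y)| ≤ d(p, y)` this gives, pointwise in `y`,
`D ^ α + d(p₀, y) ^ α - 2 D ^ s d(p₀, y) ^ s ≤ d(p, y) ^ α`.
Integrating and bounding `E[d(p₀, y₀) ^ s] ≤ √(E[d(p₀, y₀) ^ α])` (Cauchy–Schwarz) yields the claim.
-/

open MeasureTheory ProbabilityTheory

namespace Real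

lemma abs_rpow_sub_rpow_le {b c s : ℝ} (hb : 0 ≤ b) (hc : 0 ≤ c) (hs₀ : 0 ≤ s) (hs₁ : s ≤ 1) :
    |b ^ s - c ^ s| ≤ |b - c| ^ s := by
  have hle : ∀ {x y : ℝ}, 0 ≤ x → 0 ≤ y → x ^ s ≤ y ^ s + |x - y| ^ s := fun {x y} hx hy =>
    calc x ^ s ≤ (y + |x - y|) ^ s := rpow_le_rpow hx (by linarith [le_abs_self (x - y)]) hs₀
      _ ≤ y ^ s + |x - y| ^ s := rpow_add_le_add_rpow hy (abs_nonneg _) hs₀ hs₁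
  rw [abs_sub_le_iff]
  constructor
  · linarith [hle hb hc]
  · linarith [abs_sub_comm b c ▸ hle hc hb]

lemma rpow_half_sq {x : ℝ} (hx : 0 ≤ x) (α : ℝ) : (x ^ (α / 2)) ^ 2 = x ^ α := by
  rw [← rpow_mul_natCast hx]
  norm_num

lemma rpow_add_rpow_sub_le_of_abs_sub_le {a b c α : ℝ} (hb : 0 ≤ b) (hc : 0 ≤ c)
    (hα₀ : 0 ≤ α) (hα₂ : α ≤ 2) (habc : |b - c| ≤ a) :
    b ^ α + c ^ α - 2 * (b ^ (α / 2) * c ^ (α / 2)) ≤ a ^ α :=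
  calc b ^ α + c ^ α - 2 * (b ^ (α / 2) * c ^ (α / 2)) = |b ^ (α / 2) - c ^ (α / 2)| ^ 2 := by
        rw [sq_abs, ← rpow_half_sq hb, ← rpow_half_sq hc]; ring
    _ ≤ (|b - c| ^ (α / 2)) ^ 2 := by
        gcongr; exact abs_rpow_sub_rpow_le hb hc (by linarith) (by linarith)
    _ = |b - c| ^ α := rpow_half_sq (abs_nonneg _) α
    _ ≤ a ^ α := rpow_le_rpow (abs_nonneg _) habc hα₀

end Real

lemma integral_le_sqrt_integral_sq {Ω : Type*} [MeasurableSpace Ω] {μ : Measure Ω}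
    [IsProbabilityMeasure μ] {X : Ω → ℝ} (hX : MemLp X 2 μ) :
    ∫ ω, X ω ∂μ ≤ √(∫ ω, X ω ^ 2 ∂μ) := by
  have hvar := variance_nonneg X μ
  rw [variance_eq_sub hX] at hvar
  exact (le_abs_self _).trans (Real.abs_le_sqrt (by simpa using hvar))

theorem integral_dist_rpow_ge {Ω M : Type*} [MeasurableSpace Ω] [MetricSpace M]
    [MeasurableSpace M] [BorelSpace M] {μ : Measure Ω} [IsProbabilityMeasure μ] {Y : Ω → M}
    (hY : AEMeasurable Y μ) {α : ℝ} (hα₀ : 0 ≤ α) (hα₂ : α ≤ 2) {p₀ p : M}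
    (hp₀ : Integrable (fun ω => dist p₀ (Y ω) ^ α) μ)
    (hp : Integrable (fun ω => dist p (Y ω) ^ α) μ) :
    ∫ ω, dist p₀ (Y ω) ^ α ∂μ + dist p p₀ ^ (α / 2) *
        (dist p p₀ ^ (α / 2) - 2 * √(∫ ω, dist p₀ (Y ω) ^ α ∂μ)) ≤
      ∫ ω, dist p (Y ω) ^ α ∂μ := by
  set D := dist p p₀
  set f₀ := ∫ ω, dist p₀ (Y ω) ^ α ∂μ
  set h : Ω → ℝ := fun ω => dist p₀ (Y ω) ^ (α / 2)
  have hh : MemLp h 2 μ := by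
    refine (memLp_two_iff_integrable_sq ?_).2 ?_
    · exact ((continuous_const.dist continuous_id).measurable.comp_aemeasurable hY).pow_const _
        |>.aestronglyMeasurable
    simpa only [h, Real.rpow_half_sq dist_nonneg] using hp₀
  have hCS : ∫ ω, h ω ∂μ ≤ √f₀ := by
    simpa only [h, Real.rpow_half_sq dist_nonneg] using integral_le_sqrt_integral_sq hh
  have hpointwise : ∀ ω, D ^ α + dist p₀ (Y ω) ^ α - 2 * (D ^ (α / 2) * h ω) ≤
      dist p (Y ω) ^ α := fun ω =>
    Real.rpow_add_rpow_sub_le_of_abs_sub_le dist_nonneg dist_nonneg hα₀ hα₂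
      (by simpa only [dist_comm (Y ω) p₀] using abs_dist_sub_le p (Y ω) p₀)
  have hint : Integrable (fun ω => D ^ α + dist p₀ (Y ω) ^ α) μ := (integrable_const _).add hp₀
  have hint' : Integrable (fun ω => 2 * (D ^ (α / 2) * h ω)) μ :=
    ((hh.integrable one_le_two).const_mul _).const_mul 2
  calc f₀ + D ^ (α / 2) * (D ^ (α / 2) - 2 * √f₀)
      = D ^ α + f₀ - 2 * (D ^ (α / 2) * √f₀) := by
        rw [← Real.rpow_half_sq dist_nonneg α]; ring
    _ ≤ D ^ α + f₀ - 2 * (D ^ (α / 2) * ∫ ω, h ω ∂μ) := by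
        gcongr
    _ = ∫ ω, D ^ α + dist p₀ (Y ω) ^ α - 2 * (D ^ (α / 2) * h ω) ∂μ := by
        rw [integral_sub hint hint', integral_add (integrable_const _) hp₀, integral_const,
          integral_const_mul, integral_const_mul]
        simp [f₀]
    _ ≤ ∫ ω, dist p (Y ω) ^ α ∂μ := integral_mono (hint.sub hint') hp hpointwise

theorem frechet_coercivity_general {M Ω : Type*} [MetricSpace M]
    [MeasurableSpace M] [BorelSpace M] [MeasurableSpace Ω]
    (μ : Measure Ω) [IsProbabilityMeasure μ]
    (y₀ : Ω → M) (hy₀ : Measurable y₀)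
    (α : ℝ) (hα : α = 1 ∨ α = 2) (p₀ : M)
    (F : M → ENNReal)
    (hF : ∀ p, F p = ∫⁻ ω, ENNReal.ofReal (dist p (y₀ ω) ^ α) ∂μ)
    (hfin : F p₀ ≠ ⊤) :
    ∀ p : M,
      ENNReal.ofReal ((F p₀).toReal +
        dist p p₀ ^ (α / 2) *
          (dist p p₀ ^ (α / 2) - 2 * Real.sqrt ((F p₀).toReal))) ≤ F p := by
  obtain ⟨hα₀, hα₂⟩ : 0 ≤ α ∧ α ≤ 2 := by rcases hα with rfl | rfl <;> norm_num
  have hmeas : ∀ q, AEStronglyMeasurable (fun ω => dist q (y₀ ω) ^ α) μ := fun q =>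
    (((continuous_const.dist continuous_id).measurable.comp hy₀).pow_const α).aestronglyMeasurable
  have hnonneg : ∀ q, 0 ≤ᵐ[μ] fun ω => dist q (y₀ ω) ^ α :=
    fun q => ae_of_all _ fun ω => by positivity
  have hint : ∀ q, F q ≠ ⊤ → Integrable (fun ω => dist q (y₀ ω) ^ α) μ := fun q hq =>
    (lintegral_ofReal_ne_top_iff_integrable (hmeas q) (hnonneg q)).1 (hF q ▸ hq)
  have htoReal : ∀ q, (F q).toReal = ∫ ω, dist q (y₀ ω) ^ α ∂μ := fun q => by
    rw [hF q, integral_eq_lintegral_of_nonneg_ae (hnonneg q) (hmeas q)]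
  intro p
  rcases eq_or_ne (F p) ⊤ with hp | hp
  · simp [hp]
  rw [ENNReal.ofReal_le_iff_le_toReal hp, htoReal p, htoReal p₀]
  exact integral_dist_rpow_ge hy₀.aemeasurable hα₀ hα₂ (hint p₀ hfin) (hint p hp)

/-- Coercivity lower bound for the Fréchet function `f_α` around a minimizer `p₀`:
`f_α(p) ≥ f_α(p₀) + d(p,p₀)^(α/2) (d(p,p₀)^(α/2) − 2 √(f_α(p₀)))` for `α ∈ {1,2}`. -/
theorem frechet_coercivity {M Ω : Type*} [MetricSpace M]
    [MeasurableSpace M] [BorelSpace M] [MeasurableSpace Ω]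
    (μ : Measure Ω) [IsProbabilityMeasure μ]
    (y₀ : Ω → M) (hy₀ : Measurable y₀)
    (α : ℝ) (hα : α = 1 ∨ α = 2) (p₀ : M)
    (F : M → ENNReal)
    (hF : ∀ p, F p = ∫⁻ ω, ENNReal.ofReal (dist p (y₀ ω) ^ α) ∂μ)
    (hfin : F p₀ ≠ ⊤) (hmin : ∀ p, F p₀ ≤ F p) :
    ∀ p : M,
      ENNReal.ofReal ((F p₀).toReal +
        dist p p₀ ^ (α / 2) *
          (dist p p₀ ^ (α / 2) - 2 * Real.sqrt ((F p₀).toReal))) ≤ F p :=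
  frechet_coercivity_general μ y₀ hy₀ α hα p₀ F hF hfin
end

section
/- In a geodesic space M with data as above, a pair (p̄, γ̄) belongs to the weighted geodesic-regression L_α estimator set Ḡ^α if and only if γ̄(1) belongs to the weighted sample L_α estimator set Ā_T^α of the treated units and p̄ = γ̄(0) belongs to the weighted sample L_α estimator set Ā_C^α of the control units. -/
/-!
Because every unit is either treated or control, the weight `β_T w_T + β_C w_C` splits the
regression objective into `β_T` times the treated objective at `γ(1)` plus `β_C` times the control
objective at `γ(0)`. Geodesics exist between any two points, so the endpoints `(γ(0), γ(1))` range
over all of `M × M` independently, and a positive combination of two functions of independent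
variables is minimized exactly when each of them is.
-/

/-- A geodesic of maximal domain in a metric space, with domain containing 0 and 1:
locally, `d(γ t₁, γ t₂) = u_γ |t₂ − t₁|` where `u_γ ≥ 0` is the speed. -/
structure Geod (M : Type*) [MetricSpace M] where
  dom : Set ℝ
  map : ℝ → M
  speed : ℝ
  speed_nonneg : 0 ≤ speed
  zero_mem : (0 : ℝ) ∈ dom
  one_mem : (1 : ℝ) ∈ dom
  locIso : ∀ t ∈ dom, ∃ ε > 0, ∀ t₁ ∈ dom, ∀ t₂ ∈ dom,
    |t₁ - t| < ε → |t₂ - t| < ε → dist (map t₁) (map t₂) = speed * |t₂ - t₁|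

theorem sum_mul_add_mul_of_binary {ι R : Type*} [Fintype ι] [CommSemiring R]
    (z : ι → ℝ) (hz : ∀ i, z i = 0 ∨ z i = 1) (wT wC : ι → R)
    (hwTsupp : ∀ i, z i = 0 → wT i = 0) (hwCsupp : ∀ i, z i = 1 → wC i = 0)
    (βT βC : R) (f : ℝ → ι → R) :
    ∑ i, (βT * wT i + βC * wC i) * f (z i) i
      = βT * ∑ i, wT i * f 1 i + βC * ∑ i, wC i * f 0 i := by
  rw [Finset.mul_sum, Finset.mul_sum, ← Finset.sum_add_distrib]
  refine Finset.sum_congr rfl fun i _ => ?_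
  rcases hz i with h | h
  · rw [h, hwTsupp i h]; ring
  · rw [h, hwCsupp i h]; ring

theorem minimizes_mul_add_mul_iff {S X Y : Type*} (f : S → X) (g : S → Y)
    (hfg : ∀ x y, ∃ s, f s = x ∧ g s = y) {c d : ℝ} (hc : 0 < c) (hd : 0 < d)
    (A : X → ℝ) (B : Y → ℝ) (s : S) :
    (∀ s', c * A (f s) + d * B (g s) ≤ c * A (f s') + d * B (g s')) ↔
      (∀ x, A (f s) ≤ A x) ∧ (∀ y, B (g s) ≤ B y) := by
  refine ⟨fun hmin => ⟨fun x => ?_, fun y => ?_⟩, fun ⟨hA, hB⟩ s' => ?_⟩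
  · obtain ⟨s', hf, hg⟩ := hfg x (g s)
    have := hmin s'
    rw [hf, hg] at this
    exact le_of_mul_le_mul_left (by linarith) hc
  · obtain ⟨s', hf, hg⟩ := hfg (f s) y
    have := hmin s'
    rw [hf, hg] at this
    exact le_of_mul_le_mul_left (by linarith) hd
  · gcongr
    exacts [hA _, hB _]

theorem mem_geodesic_regression_iff_general {M : Type*} [MetricSpace M]
    (hgeo : ∀ p q : M, ∃ γ : Geod M, γ.map 0 = p ∧ γ.map 1 = q ∧ γ.speed = dist p q ∧
      ∀ t₁ ∈ γ.dom, ∀ t₂ ∈ γ.dom, dist (γ.map t₁) (γ.map t₂) = γ.speed * |t₂ - t₁|)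
    (α : ℝ)
    (n : ℕ) (z : Fin n → ℝ) (hz : ∀ i, z i = 0 ∨ z i = 1)
    (r : Fin n → M) (wT wC : Fin n → ℝ)
    (hwTsupp : ∀ i, z i = 0 → wT i = 0) (hwCsupp : ∀ i, z i = 1 → wC i = 0)
    (βT βC : ℝ) (hβT : βT ∈ Set.Ioo (0 : ℝ) 1) (hβC : βC ∈ Set.Ioo (0 : ℝ) 1)
    (gbar : Geod M) :
    (∀ γ' : Geod M,
        ∑ i, (βT * wT i + βC * wC i) * dist (gbar.map (z i)) (r i) ^ α
          ≤ ∑ i, (βT * wT i + βC * wC i) * dist (γ'.map (z i)) (r i) ^ α)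
      ↔ ((∀ q : M, ∑ i, wT i * dist (gbar.map 1) (r i) ^ α ≤ ∑ i, wT i * dist q (r i) ^ α) ∧
         (∀ q : M, ∑ i, wC i * dist (gbar.map 0) (r i) ^ α ≤ ∑ i, wC i * dist q (r i) ^ α)) := by
  have hendpoints : ∀ q p : M, ∃ γ : Geod M, γ.map 1 = q ∧ γ.map 0 = p := fun q p => by
    obtain ⟨γ, h0, h1, -⟩ := hgeo p q
    exact ⟨γ, h1, h0⟩
  have hsplit : ∀ γ : Geod M, ∑ i, (βT * wT i + βC * wC i) * dist (γ.map (z i)) (r i) ^ α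
      = βT * ∑ i, wT i * dist (γ.map 1) (r i) ^ α + βC * ∑ i, wC i * dist (γ.map 0) (r i) ^ α :=
    fun γ => sum_mul_add_mul_of_binary z hz wT wC hwTsupp hwCsupp βT βC
      fun t i => dist (γ.map t) (r i) ^ α
  simp only [hsplit]
  exact minimizes_mul_add_mul_iff (·.map 1) (·.map 0) hendpoints hβT.1 hβC.1
    (fun q => ∑ i, wT i * dist q (r i) ^ α) (fun p => ∑ i, wC i * dist p (r i) ^ α) gbar

/-- In a geodesic space, a pair `(p̄, gbar)` with `p̄ = gbar(0)` minimizes the weighted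
geodesic-regression objective `Q` iff `gbar(1)` is a weighted sample `L_α` estimator of the
treated units and `gbar(0)` is a weighted sample `L_α` estimator of the control units. -/
theorem mem_geodesic_regression_iff {M : Type*} [MetricSpace M]
    (hgeo : ∀ p q : M, ∃ γ : Geod M, γ.map 0 = p ∧ γ.map 1 = q ∧ γ.speed = dist p q ∧
      ∀ t₁ ∈ γ.dom, ∀ t₂ ∈ γ.dom, dist (γ.map t₁) (γ.map t₂) = γ.speed * |t₂ - t₁|)
    (α : ℝ) (hα : α = 1 ∨ α = 2)
    (n : ℕ) (z : Fin n → ℝ) (hz : ∀ i, z i = 0 ∨ z i = 1)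
    (r : Fin n → M) (wT wC : Fin n → ℝ)
    (hwT0 : ∀ i, 0 ≤ wT i) (hwC0 : ∀ i, 0 ≤ wC i)
    (hwTsupp : ∀ i, z i = 0 → wT i = 0) (hwCsupp : ∀ i, z i = 1 → wC i = 0)
    (hwT1 : ∑ i, wT i = 1) (hwC1 : ∑ i, wC i = 1)
    (βT βC : ℝ) (hβT : βT ∈ Set.Ioo (0 : ℝ) 1) (hβC : βC ∈ Set.Ioo (0 : ℝ) 1)
    (hβ : βT + βC = 1)
    (hAT : ∃ p : M, ∀ q : M, ∑ i, wT i * dist p (r i) ^ α ≤ ∑ i, wT i * dist q (r i) ^ α)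
    (hAC : ∃ p : M, ∀ q : M, ∑ i, wC i * dist p (r i) ^ α ≤ ∑ i, wC i * dist q (r i) ^ α)
    (gbar : Geod M) :
    (∀ γ' : Geod M,
        ∑ i, (βT * wT i + βC * wC i) * dist (gbar.map (z i)) (r i) ^ α
          ≤ ∑ i, (βT * wT i + βC * wC i) * dist (γ'.map (z i)) (r i) ^ α)
      ↔ ((∀ q : M, ∑ i, wT i * dist (gbar.map 1) (r i) ^ α ≤ ∑ i, wT i * dist q (r i) ^ α) ∧
         (∀ q : M, ∑ i, wC i * dist (gbar.map 0) (r i) ^ α ≤ ∑ i, wC i * dist q (r i) ^ α)) :=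
  mem_geodesic_regression_iff_general hgeo α n z hz r wT wC hwTsupp hwCsupp βT βC hβT hβC gbar
end

section
/- Let M be a proper metric space, α ∈ {1,2}, and suppose the random functions f̂_{α,N} and the deterministic limit f_α satisfy: (i) f̂_{α,N}(p) → f_α(p) almost surely for each fixed p, (ii) f̂_{α/2,N}(p₀) → f_{α/2}(p₀) almost surely for a fixed p₀, with all these quantities finite, and f_α is continuous. Then for any compact K ⊂ M, sup_{p ∈ K} |f̂_{α,N}(p) − f_α(p)| → 0 almost surely. -/
/-!
Almost surely, the functionals `f̂_{α,N}` converge at every point of a countable dense subset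
`D` of `K`, and they form an equicontinuous family: for `α = 1` each is `1`-Lipschitz, and for
`α = 2` the factorisation `a² - b² = (a - b)(a + b)` bounds their local Lipschitz constants by
`f̂_{1,N}(p₀)`, which converges and hence is bounded in `N`. Equicontinuity carries the
convergence from `D` to its closure, and on the compact `K` Arzelà–Ascoli upgrades pointwise
convergence of an equicontinuous family to uniform convergence.
-/

open MeasureTheory Filter Topology Metric

theorem tendstoUniformlyOn_of_equicontinuousAt_of_tendsto_dense {ι X α : Type*}
    [TopologicalSpace X] [UniformSpace α] {l : Filter ι} {F : ι → X → α} {f : X → α}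
    {K D : Set X} (hK : IsCompact K) (hF : ∀ x ∈ K, EquicontinuousAt F x)
    (hf : ContinuousOn f K) (hDK : D ⊆ K) (hKD : K ⊆ closure D)
    (hD : ∀ x ∈ D, Tendsto (F · x) l (𝓝 (f x))) : TendstoUniformlyOn F f l K := by
  have hK_pt : ∀ x ∈ K, Tendsto (F · x) l (𝓝 (f x)) := fun x hx ↦
    (hF x hx).tendsto_of_mem_closure ((hf x hx).mono hDK) hD (hKD hx)
  have hunif := (EquicontinuousOn.tendsto_uniformOnFun_iff_pi' (𝔖 := {K})
    (by rintro _ rfl; exact hK)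
    (by rintro _ rfl x hx; exact (hF x hx).equicontinuousWithinAt _) l f).2
    (by simpa [tendsto_pi_nhds] using fun x hx ↦ hK_pt x hx)
  exact UniformOnFun.tendsto_iff_tendstoUniformlyOn.1 hunif K rfl

theorem tendsto_iSup_abs_sub_of_tendstoUniformlyOn {ι X : Type*} {l : Filter ι}
    {F : ι → X → ℝ} {f : X → ℝ} {K : Set X} (h : TendstoUniformlyOn F f l K) :
    Tendsto (fun i ↦ ⨆ x : K, |F i x - f x|) l (𝓝 0) := by
  rw [Metric.tendsto_nhds]
  intro ε hε
  filter_upwards [Metric.tendstoUniformlyOn_iff.1 h (ε / 2) (half_pos hε)] with i hi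
  have hsup : ⨆ x : K, |F i x - f x| ≤ ε / 2 :=
    Real.iSup_le (fun x ↦ by simpa [Real.dist_eq, abs_sub_comm] using (hi x x.2).le)
      (by positivity)
  rw [Real.dist_0_eq_abs, abs_of_nonneg (Real.iSup_nonneg fun _ ↦ abs_nonneg _)]
  linarith

theorem equicontinuousAt_of_eventually_dist_le_mul {ι X α : Type*} [PseudoMetricSpace X]
    [PseudoMetricSpace α] {F : ι → X → α} {x : X} (C : ℝ)
    (h : ∀ᶠ q in 𝓝 x, ∀ i, dist (F i x) (F i q) ≤ C * dist x q) : EquicontinuousAt F x :=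
  Metric.equicontinuousAt_of_continuity_modulus (fun q ↦ C * dist x q)
    (by simpa using ((tendsto_const_nhds (x := x)).dist (tendsto_id (x := 𝓝 x))).const_mul C) F h

theorem abs_sum_mul_sub_sum_mul_le {ι : Type*} {s : Finset ι} {w a b c : ι → ℝ}
    (hw : ∀ i ∈ s, 0 ≤ w i) (h : ∀ i ∈ s, |a i - b i| ≤ c i) :
    |∑ i ∈ s, w i * a i - ∑ i ∈ s, w i * b i| ≤ ∑ i ∈ s, w i * c i := by
  rw [← Finset.sum_sub_distrib]
  refine (Finset.abs_sum_le_sum_abs _ _).trans (Finset.sum_le_sum fun i hi ↦ ?_)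
  rw [← mul_sub, abs_mul, abs_of_nonneg (hw i hi)]
  exact mul_le_mul_of_nonneg_left (h i hi) (hw i hi)

theorem abs_dist_sq_sub_dist_sq_le {M : Type*} [PseudoMetricSpace M] (p q y p₀ : M) :
    |dist p y ^ 2 - dist q y ^ 2| ≤ dist p q * (2 * dist p₀ y + dist p p₀ + dist q p₀) := by
  have hp := dist_triangle p p₀ y
  have hq := dist_triangle q p₀ y
  rw [sq_sub_sq, abs_mul, abs_of_nonneg (by positivity : 0 ≤ dist p y + dist q y), mul_comm]
  exact mul_le_mul (abs_dist_sub_le p q y) (by linarith) (by positivity) dist_nonneg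

section EmpiricalFrechet

variable {M : Type*} [PseudoMetricSpace M] {w : ℕ → ℕ → ℝ} {y : ℕ → M}

noncomputable def empiricalFrechet (w : ℕ → ℕ → ℝ) (y : ℕ → M) (α : ℝ) (N : ℕ) (p : M) :
    ℝ :=
  ∑ i ∈ Finset.range N, w N i * dist p (y i) ^ α

variable (hw0 : ∀ N i, 0 ≤ w N i) (hw1 : ∀ N, ∑ i ∈ Finset.range N, w N i = 1)
include hw0 hw1

theorem lipschitzWith_empiricalFrechet_one (N : ℕ) :
    LipschitzWith 1 (empiricalFrechet w y 1 N) := by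
  refine LipschitzWith.of_dist_le_mul fun p q ↦ ?_
  simp only [empiricalFrechet, Real.rpow_one, Real.dist_eq, NNReal.coe_one, one_mul]
  calc _ ≤ ∑ i ∈ Finset.range N, w N i * dist p q :=
        abs_sum_mul_sub_sum_mul_le (fun i _ ↦ hw0 N i) fun i _ ↦ abs_dist_sub_le p q (y i)
    _ = dist p q := by rw [← Finset.sum_mul, hw1 N, one_mul]

theorem abs_empiricalFrechet_two_sub_le (p₀ p q : M) (N : ℕ) :
    |empiricalFrechet w y 2 N p - empiricalFrechet w y 2 N q| ≤
      dist p q * (2 * empiricalFrechet w y 1 N p₀ + dist p p₀ + dist q p₀) := by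
  simp only [empiricalFrechet, Real.rpow_two, Real.rpow_one]
  calc _ ≤ ∑ i ∈ Finset.range N,
          w N i * (dist p q * (2 * dist p₀ (y i) + dist p p₀ + dist q p₀)) :=
        abs_sum_mul_sub_sum_mul_le (fun i _ ↦ hw0 N i) fun i _ ↦
          abs_dist_sq_sub_dist_sq_le p q (y i) p₀
    _ = dist p q * (2 * ∑ i ∈ Finset.range N, w N i * dist p₀ (y i) +
          (dist p p₀ + dist q p₀) * ∑ i ∈ Finset.range N, w N i) := by
      simp only [Finset.mul_sum, ← Finset.sum_add_distrib]
      exact Finset.sum_congr rfl fun i _ ↦ by ring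
    _ = _ := by rw [hw1 N]; ring

theorem equicontinuous_empiricalFrechet_two (p₀ : M) {B : ℝ}
    (hB : ∀ N, empiricalFrechet w y 1 N p₀ ≤ B) :
    Equicontinuous (empiricalFrechet w y 2) := by
  intro x
  refine equicontinuousAt_of_eventually_dist_le_mul (2 * B + 2 * dist x p₀ + 1) ?_
  filter_upwards [ball_mem_nhds x one_pos] with q hq N
  have hqp₀ : dist q p₀ ≤ dist x p₀ + 1 := by
    linarith [dist_triangle q x p₀, dist_comm q x, mem_ball.1 hq]
  calc dist (empiricalFrechet w y 2 N x) (empiricalFrechet w y 2 N q)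
      ≤ dist x q * (2 * empiricalFrechet w y 1 N p₀ + dist x p₀ + dist q p₀) :=
        abs_empiricalFrechet_two_sub_le hw0 hw1 p₀ x q N
    _ ≤ dist x q * (2 * B + 2 * dist x p₀ + 1) :=
        mul_le_mul_of_nonneg_left (by linarith [hB N]) dist_nonneg
    _ = _ := mul_comm _ _

end EmpiricalFrechet

theorem empirical_frechet_unif_tendsto_general {Ω M : Type*} [MeasurableSpace Ω]
    [MetricSpace M]
    (μ : Measure Ω)
    (α : ℝ) (hα : α = 1 ∨ α = 2)
    (y : ℕ → Ω → M) (w : ℕ → ℕ → Ω → ℝ)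
    (hw0 : ∀ N i ω, 0 ≤ w N i ω)
    (hw1 : ∀ N ω, ∑ i ∈ Finset.range N, w N i ω = 1)
    (fα : M → ℝ) (hcont : Continuous fα)
    (hpt : ∀ p : M, ∀ᵐ ω ∂μ,
      Tendsto (fun N => ∑ i ∈ Finset.range N, w N i ω * dist p (y i ω) ^ α)
        atTop (nhds (fα p)))
    (p₀ : M) (fhalf : ℝ)
    (hhalf : ∀ᵐ ω ∂μ,
      Tendsto (fun N => ∑ i ∈ Finset.range N, w N i ω * dist p₀ (y i ω) ^ (α / 2))
        atTop (nhds fhalf)) :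
    ∀ K : Set M, IsCompact K →
      ∀ᵐ ω ∂μ, Tendsto
        (fun N => ⨆ p : K,
          |(∑ i ∈ Finset.range N, w N i ω * dist (p : M) (y i ω) ^ α) - fα p|)
        atTop (nhds 0) := by
  intro K hK
  obtain ⟨D, hDK, hDc, hKD⟩ := hK.isSeparable.exists_countable_dense_subset
  have hconvD : ∀ᵐ ω ∂μ, ∀ p ∈ D,
      Tendsto (empiricalFrechet (w · · ω) (y · ω) α · p) atTop (𝓝 (fα p)) :=
    (ae_ball_iff hDc).2 fun p _ ↦ hpt p
  have hequi : ∀ᵐ ω ∂μ, Equicontinuous (empiricalFrechet (w · · ω) (y · ω) α) := by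
    rcases hα with rfl | rfl
    · exact ae_of_all _ fun ω ↦ (LipschitzWith.uniformEquicontinuous _ 1
        (lipschitzWith_empiricalFrechet_one (hw0 · · ω) (hw1 · ω))).equicontinuous
    · filter_upwards [hhalf] with ω hω
      rw [div_self two_ne_zero] at hω
      obtain ⟨B, hB⟩ := hω.bddAbove_range
      exact equicontinuous_empiricalFrechet_two (hw0 · · ω) (hw1 · ω) p₀
        fun N ↦ hB ⟨N, rfl⟩
  filter_upwards [hconvD, hequi] with ω hωD hωE
  set F := empiricalFrechet (w · · ω) (y · ω) α
  have hunif : TendstoUniformlyOn F fα atTop K :=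
    tendstoUniformlyOn_of_equicontinuousAt_of_tendsto_dense hK (fun x _ ↦ hωE x)
      hcont.continuousOn hDK hKD hωD
  exact tendsto_iSup_abs_sub_of_tendstoUniformlyOn (F := F) hunif

/-- Uniform a.s. convergence of weighted empirical Fréchet functionals over compact sets:
pointwise a.s. convergence of `f̂_{α,N}` to a continuous `f_α`, together with a.s. convergence
of `f̂_{α/2,N}(p₀)`, implies `sup_{p∈K} |f̂_{α,N}(p) − f_α(p)| → 0` a.s. for every compact `K`. -/
theorem empirical_frechet_unif_tendsto {Ω M : Type*} [MeasurableSpace Ω]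
    [MetricSpace M] [ProperSpace M]
    (μ : Measure Ω) [IsProbabilityMeasure μ]
    (α : ℝ) (hα : α = 1 ∨ α = 2)
    (y : ℕ → Ω → M) (w : ℕ → ℕ → Ω → ℝ)
    (hw0 : ∀ N i ω, 0 ≤ w N i ω)
    (hw1 : ∀ N ω, ∑ i ∈ Finset.range N, w N i ω = 1)
    (fα : M → ℝ) (hcont : Continuous fα)
    (hpt : ∀ p : M, ∀ᵐ ω ∂μ,
      Tendsto (fun N => ∑ i ∈ Finset.range N, w N i ω * dist p (y i ω) ^ α)
        atTop (nhds (fα p)))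
    (p₀ : M) (fhalf : ℝ)
    (hhalf : ∀ᵐ ω ∂μ,
      Tendsto (fun N => ∑ i ∈ Finset.range N, w N i ω * dist p₀ (y i ω) ^ (α / 2))
        atTop (nhds fhalf)) :
    ∀ K : Set M, IsCompact K →
      ∀ᵐ ω ∂μ, Tendsto
        (fun N => ⨆ p : K,
          |(∑ i ∈ Finset.range N, w N i ω * dist (p : M) (y i ω) ^ α) - fα p|)
        atTop (nhds 0) :=
  empirical_frechet_unif_tendsto_general μ α hα y w hw0 hw1 fα hcont hpt p₀ fhalf hhalf
end

section
/- Let M = S² ⊂ ℝ³ with the geodesic (great-circle) distance, p = (0,0,1) the north pole, and c ∈ (0, π/2). Consider the three points a₁ = (sin c, 0, cos c), a₂ = (−(sin c)/2, (√3/2) sin c, cos c), a₃ = (−(sin c)/2, −(√3/2) sin c, cos c), each at geodesic distance c from p. Then p is the unique Fréchet mean of the uniform distribution on {a₁, a₂, a₃}, i.e., p uniquely minimizes q ↦ (1/3) Σ_{i=1}^3 d(q, a_i)² over S². -/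
/-!
Put `t = ⟨q, aᵢ⟩ = cos θ`. On `[-1, 1]` the function `t ↦ arccos² t` lies above its tangent line at
`t = cos c`, which has slope `-2c / sin c`; in the variable `θ` this says that
`θ ↦ θ² sin c + 2c cos θ` is minimized on `[0, π]` at `θ = c`, because its derivative
`2 (θ sin c - c sin θ)` changes sign at `c` (`sin θ / θ` is decreasing). The three tangent bounds are
linear in `q`, and `∑ᵢ aᵢ = 3 cos c • p`, so adding them gives
`F q ≥ c² + (2c cos c / sin c) (1 - q₂) ≥ c² = F p`, with equality only when `q₂ = 1`, i.e. `q = p`.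
-/

open Real

lemma mul_sin_le_mul_sin_of_le {x y : ℝ} (hx : 0 ≤ x) (hxy : x ≤ y) (hy : y ≤ π) :
    x * sin y ≤ y * sin x := by
  rcases hx.eq_or_lt with rfl | hx
  · simp
  rcases hxy.eq_or_lt with rfl | hxy
  · rfl
  have hslope := strictConcaveOn_sin_Icc.secant_strict_mono (a := 0) ⟨le_rfl, pi_pos.le⟩
    ⟨hx.le, hxy.le.trans hy⟩ ⟨(hx.trans hxy).le, hy⟩ hx.ne' (hx.trans hxy).ne' hxy
  simp only [sin_zero, sub_zero] at hslope
  rw [div_lt_div_iff₀ (hx.trans hxy) hx] at hslope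
  linarith

lemma isMinOn_sq_mul_sin_add_two_mul_cos {c : ℝ} (hc0 : 0 ≤ c) (hcπ : c ≤ π) :
    IsMinOn (fun θ ↦ θ ^ 2 * sin c + 2 * c * cos θ) (Set.Icc 0 π) c := by
  set φ : ℝ → ℝ := fun θ ↦ θ ^ 2 * sin c + 2 * c * cos θ
  have hderiv (θ : ℝ) : HasDerivAt φ (2 * (θ * sin c - c * sin θ)) θ :=
    (((hasDerivAt_pow 2 θ).mul_const (sin c)).fun_add
      ((hasDerivAt_cos θ).const_mul (2 * c))).congr_deriv (by norm_num; ring)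
  have hcont : Continuous φ := by fun_prop
  have hanti : AntitoneOn φ (Set.Icc 0 c) := by
    refine antitoneOn_of_hasDerivWithinAt_nonpos (convex_Icc 0 c) hcont.continuousOn
      (fun θ _ ↦ (hderiv θ).hasDerivWithinAt) fun θ hθ ↦ ?_
    rw [interior_Icc] at hθ
    linarith [mul_sin_le_mul_sin_of_le hθ.1.le hθ.2.le hcπ]
  have hmono : MonotoneOn φ (Set.Icc c π) := by
    refine monotoneOn_of_hasDerivWithinAt_nonneg (convex_Icc c π) hcont.continuousOn
      (fun θ _ ↦ (hderiv θ).hasDerivWithinAt) fun θ hθ ↦ ?_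
    rw [interior_Icc] at hθ
    linarith [mul_sin_le_mul_sin_of_le hc0 hθ.1.le hθ.2.le]
  intro θ hθ
  rcases le_total θ c with hθc | hθc
  · exact hanti ⟨hθ.1, hθc⟩ ⟨hc0, le_rfl⟩ hθc
  · exact hmono ⟨le_rfl, hcπ⟩ ⟨hθc, hθ.2⟩ hθc

lemma arccos_sq_mul_sin_ge_tangent {c t : ℝ} (hc0 : 0 ≤ c) (hcπ : c ≤ π) (ht : t ∈ Set.Icc (-1) 1) :
    c ^ 2 * sin c + 2 * c * (cos c - t) ≤ arccos t ^ 2 * sin c := by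
  have hmin : c ^ 2 * sin c + 2 * c * cos c ≤ arccos t ^ 2 * sin c + 2 * c * cos (arccos t) :=
    isMinOn_sq_mul_sin_add_two_mul_cos hc0 hcπ ⟨arccos_nonneg t, arccos_le_pi t⟩
  rw [cos_arccos ht.1 ht.2] at hmin
  linarith

lemma sum_mul_mem_Icc_of_sum_sq_le_one {ι : Type*} [Fintype ι] {u v : ι → ℝ}
    (hu : ∑ i, u i ^ 2 ≤ 1) (hv : ∑ i, v i ^ 2 ≤ 1) : ∑ i, u i * v i ∈ Set.Icc (-1) 1 := by
  have hsq : (∑ i, u i * v i) ^ 2 ≤ 1 :=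
    (Finset.sum_mul_sq_le_sq_mul_sq _ u v).trans
      (mul_le_one₀ hu (Finset.sum_nonneg fun i _ ↦ sq_nonneg (v i)) hv)
  exact abs_le.mp ((sq_le_one_iff_abs_le_one _).mp hsq)

lemma eq_north_pole_of_one_le {q : Fin 3 → ℝ} (hq : ∑ i, q i ^ 2 = 1) (h : 1 ≤ q 2) :
    q = ![0, 0, 1] := by
  rw [Fin.sum_univ_three] at hq
  have h2 : q 2 = 1 := by nlinarith [sq_nonneg (q 0), sq_nonneg (q 1)]
  have h0 : q 0 = 0 := by nlinarith [sq_nonneg (q 0), sq_nonneg (q 1)]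
  have h1 : q 1 = 0 := by nlinarith [sq_nonneg (q 0), sq_nonneg (q 1)]
  ext i
  fin_cases i <;> simp [h0, h1, h2]

/-- The north pole `p` is the unique Fréchet mean (for the great-circle distance
`d(x,y) = arccos⟨x,y⟩`) of the uniform distribution on the three symmetric points
`a₁, a₂, a₃` at colatitude `c ∈ (0, π/2)` on the unit sphere `S²`. -/
theorem north_pole_unique_frechet_mean (c : ℝ) (hc : c ∈ Set.Ioo 0 (π / 2))
    (p a₁ a₂ a₃ : Fin 3 → ℝ)
    (hp : p = ![0, 0, 1])
    (h1 : a₁ = ![sin c, 0, cos c])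
    (h2 : a₂ = ![-(sin c) / 2, (Real.sqrt 3 / 2) * sin c, cos c])
    (h3 : a₃ = ![-(sin c) / 2, -((Real.sqrt 3 / 2) * sin c), cos c])
    (F : (Fin 3 → ℝ) → ℝ)
    (hF : ∀ q, F q = (1 / 3) *
      ((arccos (∑ i, q i * a₁ i)) ^ 2 + (arccos (∑ i, q i * a₂ i)) ^ 2 +
        (arccos (∑ i, q i * a₃ i)) ^ 2)) :
    ∀ q : Fin 3 → ℝ, (∑ i, q i ^ 2) = 1 → F p ≤ F q ∧ (F q = F p → q = p) := by
  obtain ⟨hc0, hc2⟩ := hc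
  have hcπ : c ≤ π := by linarith [pi_pos]
  have hsin : 0 < sin c := sin_pos_of_pos_of_lt_pi hc0 (by linarith [pi_pos])
  have hcos : 0 < cos c := cos_pos_of_mem_Ioo ⟨by linarith [pi_pos], hc2⟩
  have hsqrt : √3 ^ 2 = 3 := sq_sqrt (by norm_num)
  subst hp h1 h2 h3
  have hFp : F ![0, 0, 1] = c ^ 2 := by
    simp [hF, Fin.sum_univ_three, arccos_cos hc0.le hcπ]
    ring
  intro q hq
  have hinner (a : Fin 3 → ℝ) (ha : ∑ i, a i ^ 2 = 1) :=
    sum_mul_mem_Icc_of_sum_sq_le_one hq.le ha.le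
  have hq2 : q 2 ≤ 1 := by
    simpa [Fin.sum_univ_three] using (hinner ![0, 0, 1] (by simp [Fin.sum_univ_three])).2
  have htangent (a : Fin 3 → ℝ) (ha : ∑ i, a i ^ 2 = 1) :=
    arccos_sq_mul_sin_ge_tangent hc0.le hcπ (hinner a ha)
  have k₁ := htangent ![sin c, 0, cos c] (by simp [Fin.sum_univ_three])
  have k₂ := htangent ![-(sin c) / 2, (√3 / 2) * sin c, cos c] (by
    simp [Fin.sum_univ_three]; linear_combination (sin c ^ 2 / 4) * hsqrt + sin_sq_add_cos_sq c)
  have k₃ := htangent ![-(sin c) / 2, -((√3 / 2) * sin c), cos c] (by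
    simp [Fin.sum_univ_three]; linear_combination (sin c ^ 2 / 4) * hsqrt + sin_sq_add_cos_sq c)
  simp only [Fin.sum_univ_three, Matrix.cons_val] at k₁ k₂ k₃ hF
  have hlower : c ^ 2 * sin c + 2 * c * cos c * (1 - q 2) ≤ F q * sin c := by
    rw [hF]
    linarith
  have hgap : 0 < 2 * c * cos c := by positivity
  rw [hFp]
  refine ⟨le_of_mul_le_mul_right ?_ hsin, fun heq ↦ eq_north_pole_of_one_le hq ?_⟩
  · nlinarith
  · rw [heq] at hlower
    nlinarith
end
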